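/- The Gaspari–Cohn function $S$ is monotone nonincreasing on $[0,2]$. -/

import Mathlib

/-- The Gaspari–Cohn tapering function on `[0, ∞)`. -/
noncomputable def gaspariCohn (x : ℝ) : ℝ :=
  if x < 1 then -(1/4)*x^5 + (1/2)*x^4 + (5/8)*x^3 - (5/3)*x^2 + 1
  else if x ≤ 2 then (1/12)*x^5 - (1/2)*x^4 + (5/8)*x^3 + (5/3)*x^2 - 5*x + 4 - 2/(3*x)
  else 0

/-!
On each of the two pieces the derivative is nonpositive. On `[0, 1]` it is `-x q(x) / 24` with
`q(x) = 17 + (1 - x)(63 + 18x - 30x²) > 0`. On `[1, 2]` it is `(x - 2)³ c(x) / (3x²)` with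
`c(x) = (5/4)x³ + (3/2)x² - (3/8)x - 1/4 > 0` for `x ≥ 1`; the triple zero at `2` reflects that
the function vanishes there to fourth order. The two pieces agree at `1`, so the monotone pieces glue.
-/

open Set

theorem antitoneOn_Icc_of_hasDerivAt_nonpos {f f' : ℝ → ℝ} {a b : ℝ}
    (hf : ∀ x ∈ Icc a b, HasDerivAt f (f' x) x) (hf'₀ : ∀ x ∈ Ioo a b, f' x ≤ 0) :
    AntitoneOn f (Icc a b) :=
  antitoneOn_of_hasDerivWithinAt_nonpos (convex_Icc a b)
    (fun x hx => (hf x hx).continuousAt.continuousWithinAt)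
    (fun x hx => (hf x (interior_subset hx)).hasDerivWithinAt)
    (fun x hx => hf'₀ x (by rwa [interior_Icc] at hx))

namespace GaspariCohn

noncomputable def inner (x : ℝ) : ℝ :=
  -(1/4)*x^5 + (1/2)*x^4 + (5/8)*x^3 - (5/3)*x^2 + 1

noncomputable def outer (x : ℝ) : ℝ :=
  (1/12)*x^5 - (1/2)*x^4 + (5/8)*x^3 + (5/3)*x^2 - 5*x + 4 - 2/(3*x)

theorem eqOn_inner : EqOn gaspariCohn inner (Icc 0 1) := by
  intro x hx
  rcases hx.2.lt_or_eq with h | rfl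
  · simp [gaspariCohn, inner, h]
  · norm_num [gaspariCohn, inner]

theorem eqOn_outer : EqOn gaspariCohn outer (Icc 1 2) := by
  intro x hx
  simp [gaspariCohn, outer, not_lt.2 hx.1, hx.2]

theorem hasDerivAt_inner (x : ℝ) :
    HasDerivAt inner (-x * (30*x^3 - 48*x^2 - 45*x + 80) / 24) x := by
  have h := (((((hasDerivAt_pow 5 x).const_mul (-(1/4) : ℝ)).add
    ((hasDerivAt_pow 4 x).const_mul (1/2 : ℝ))).add
    ((hasDerivAt_pow 3 x).const_mul (5/8 : ℝ))).sub
    ((hasDerivAt_pow 2 x).const_mul (5/3 : ℝ))).add_const 1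
  exact h.congr_deriv (by push_cast; ring)

theorem hasDerivAt_outer {x : ℝ} (hx : x ≠ 0) :
    HasDerivAt outer ((x - 2)^3 * ((5/4)*x^3 + (3/2)*x^2 - (3/8)*x - 1/4) / (3*x^2)) x := by
  have hrec : HasDerivAt (fun y => 2 * (3 * y)⁻¹) (2 * (-(3 * 1) / (3 * x) ^ 2)) x :=
    (((hasDerivAt_id x).const_mul (3 : ℝ)).fun_inv (by simpa using hx)).const_mul 2
  have h := ((((((hasDerivAt_pow 5 x).const_mul (1/12 : ℝ)).sub
    ((hasDerivAt_pow 4 x).const_mul (1/2 : ℝ))).add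
    ((hasDerivAt_pow 3 x).const_mul (5/8 : ℝ))).add
    ((hasDerivAt_pow 2 x).const_mul (5/3 : ℝ))).sub
    ((hasDerivAt_id x).const_mul (5 : ℝ))).add_const 4 |>.sub hrec
  refine (h.congr_deriv ?_).congr_of_eventuallyEq (Filter.Eventually.of_forall fun y => ?_)
  · field_simp
    push_cast
    ring
  · simp only [outer, Pi.add_apply, Pi.sub_apply, id]
    ring

theorem antitoneOn_inner : AntitoneOn inner (Icc 0 1) := by
  refine antitoneOn_Icc_of_hasDerivAt_nonpos (fun x _ => hasDerivAt_inner x) ?_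
  rintro x ⟨hx0, hx1⟩
  have hq : 0 < 30*x^3 - 48*x^2 - 45*x + 80 := by
    have : 0 ≤ (1 - x) * (63 + 18*x - 30*x^2) := mul_nonneg (by linarith) (by nlinarith)
    linarith
  have : 0 ≤ x * (30*x^3 - 48*x^2 - 45*x + 80) := mul_nonneg hx0.le hq.le
  linarith

theorem antitoneOn_outer : AntitoneOn outer (Icc 1 2) := by
  refine antitoneOn_Icc_of_hasDerivAt_nonpos
    (fun x hx => hasDerivAt_outer (by linarith [hx.1])) ?_
  rintro x ⟨hx1, hx2⟩
  have hcube : (x - 2)^3 ≤ 0 := Odd.pow_nonpos (by decide) (by linarith)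
  have hc : 0 ≤ (5/4)*x^3 + (3/2)*x^2 - (3/8)*x - 1/4 := by nlinarith
  exact div_nonpos_of_nonpos_of_nonneg (mul_nonpos_of_nonpos_of_nonneg hcube hc) (by positivity)

end GaspariCohn

open GaspariCohn in
theorem gaspariCohn_antitoneOn : AntitoneOn gaspariCohn (Set.Icc (0 : ℝ) 2) := by
  have h₁ : AntitoneOn gaspariCohn (Icc 0 1) := antitoneOn_inner.congr eqOn_inner.symm
  have h₂ : AntitoneOn gaspariCohn (Icc 1 2) := antitoneOn_outer.congr eqOn_outer.symm
  rw [← Icc_union_Icc_eq_Icc zero_le_one one_le_two]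
  exact h₁.union_right h₂ (isGreatest_Icc zero_le_one) (isLeast_Icc one_le_two)
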